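/- arXiv:2303.04367 — 3 statements merged into one kernel-verified Lean document; each statement's English description precedes it below -/
import Mathlib

section
/- Let a = A+α and b = B+β be commuting affine parabolic maps of T^d. There exists a constant C = C(A,B) > 0 such that for every resonant vector m ∈ ℤ^d with associated resonance pair (k,l) (the unique pair with k∧l = 1 and kÂm + lB̂m = 0, where Ā^kB̄^l m = m), one has C(|k| + |l|) ≤ |m|, where |·| denotes the Euclidean norm. -/
open MeasureTheory

namespace ParabolicKAM

/-- Points of `ℝ^d` (lifts of points of the torus `𝕋^d`). -/
abbrev Vec (d : ℕ) := Fin d → ℝ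

/-- Integer vectors (Fourier frequencies). -/
abbrev IVec (d : ℕ) := Fin d → ℤ

/-- Square integer matrices. -/
abbrev Mat (d : ℕ) := Matrix (Fin d) (Fin d) ℤ

/-- The `d`-dimensional torus. -/
abbrev Td (d : ℕ) := Fin d → AddCircle (1 : ℝ)

instance : Fact ((0 : ℝ) < 1) := ⟨one_pos⟩

/-- The real matrix with the same entries as an integer matrix. -/
def rmat {d₁ d₂ : ℕ} (A : Matrix (Fin d₁) (Fin d₂) ℤ) : Matrix (Fin d₁) (Fin d₂) ℝ :=
  A.map fun a => (a : ℝ)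

/-- The affine map `x ↦ A x + α` on `ℝ^d` (a lift of the affine torus map). -/
def affR {d : ℕ} (A : Mat d) (α : Vec d) : Vec d → Vec d :=
  fun x => (rmat A).mulVec x + α

/-- `A` is parabolic (unipotent). -/
def IsParabolic {d : ℕ} (A : Mat d) : Prop := ∃ S : ℕ, (A - 1) ^ S = 0

/-- `A` is parabolic of step exactly `S`. -/
def IsStepParabolic {d : ℕ} (A : Mat d) (S : ℕ) : Prop :=
  (A - 1) ^ S = 0 ∧ (A - 1) ^ (S - 1) ≠ 0

/-- `A` is step-2 parabolic. -/
def IsStep2 {d : ℕ} (A : Mat d) : Prop := (A - 1) ^ 2 = 0 ∧ A ≠ 1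

/-- `(α, β)` is an admissible pair of translation parts: `(A - Id) β = (B - Id) α`. -/
def TAB {d : ℕ} (A B : Mat d) (α β : Vec d) : Prop :=
  (rmat (A - 1)).mulVec β = (rmat (B - 1)).mulVec α

/-- The dual matrix `Ā = (Aᵀ)⁻¹` (acting on frequencies). -/
noncomputable def dual {d : ℕ} (A : Mat d) : Mat d := A.transpose⁻¹

/-- `Â = Ā - Id`. -/
noncomputable def hat {d : ℕ} (A : Mat d) : Mat d := dual A - 1

/-- Integer powers of a matrix. -/
noncomputable def zpowM {d : ℕ} (A : Mat d) : ℤ → Mat d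
  | Int.ofNat n => A ^ n
  | Int.negSucc n => (A ^ (n + 1))⁻¹

/-- Euclidean norm of an integer vector. -/
noncomputable def inorm {d : ℕ} (m : IVec d) : ℝ :=
  Real.sqrt (∑ i, ((m i : ℝ)) ^ 2)

/-- Euclidean norm of a real vector. -/
noncomputable def rnorm {d : ℕ} (v : Vec d) : ℝ :=
  Real.sqrt (∑ i, (v i) ^ 2)

/-- Standard inner product of integer vectors. -/
def iprod {d : ℕ} (m n : IVec d) : ℤ := ∑ i, m i * n i

/-- Euclidean operator norm of (the real matrix of) an integer matrix. -/
noncomputable def eopNorm {d : ℕ} (M : Mat d) : ℝ :=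
  ‖LinearMap.toContinuousLinearMap (Matrix.toEuclideanLin (rmat M))‖

/-- `m` is a resonant vector for the dual action of `⟨A, B⟩`. -/
def Resonant {d : ℕ} (A B : Mat d) (m : IVec d) : Prop :=
  m ≠ 0 ∧
    (∃ k l : ℤ, ¬(k = 0 ∧ l = 0) ∧ (zpowM (dual A) k * zpowM (dual B) l).mulVec m = m) ∧
    ((dual A).mulVec m ≠ m ∨ (dual B).mulVec m ≠ m)

/-- The normalization `k ∧ l = 1` for resonance pairs. -/
def NormalizedPair (k l : ℤ) : Prop :=
  (k = 1 ∧ l = 0) ∨ (k = 0 ∧ l = 1) ∨ (Int.gcd k l = 1 ∧ 0 < k)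

/-- `(k, l)` is the resonance pair associated to the resonant vector `m`. -/
def IsResPair {d : ℕ} (A B : Mat d) (m : IVec d) (k l : ℤ) : Prop :=
  NormalizedPair k l ∧ k • (hat A).mulVec m + l • (hat B).mulVec m = 0

/-- `m ∈ 𝒞₁`: degenerate frequencies, fixed by the whole dual action. -/
def InC1 {d : ℕ} (A B : Mat d) (m : IVec d) : Prop :=
  m ≠ 0 ∧ (dual A).mulVec m = m ∧ (dual B).mulVec m = m

/-- `m ∈ 𝒞₃`: nonzero, non-degenerate, non-resonant frequencies. -/
def InC3 {d : ℕ} (A B : Mat d) (m : IVec d) : Prop :=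
  m ≠ 0 ∧ ¬InC1 A B m ∧ ¬Resonant A B m

/-- `s` is the step of the frequency `m`: the least `s` with `B̂^s m = 0`. -/
def stepOf {d : ℕ} (B : Mat d) (m : IVec d) (s : ℕ) : Prop :=
  ((hat B) ^ s).mulVec m = 0 ∧ ∀ t : ℕ, ((hat B) ^ t).mulVec m = 0 → s ≤ t

/-- `m` is a lowest point on its `Ā`-orbit (for step-2 `A`, `Ā^k m = m + k Â m`). -/
def LowestOnOrbit {d : ℕ} (A : Mat d) (m : IVec d) : Prop :=
  ∀ k : ℤ, inorm m ≤ inorm (m + k • (hat A).mulVec m)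

/-- The affine map of the torus with integer linear part `M` and translation `γ`. -/
noncomputable def affT {n : ℕ} (M : Mat n) (γ : Td n) : Td n → Td n :=
  fun x i => (∑ j, M i j • x j) + γ i

/-- The projection of tori induced by an integer matrix `P`. -/
noncomputable def projT {n d : ℕ} (P : Matrix (Fin n) (Fin d) ℤ) : Td d → Td n :=
  fun x i => ∑ j, P i j • x j

/-- The point of the torus below `α ∈ ℝ^d`. -/
noncomputable def toT {d : ℕ} (α : Vec d) : Td d := fun i => (α i : AddCircle (1 : ℝ))

/-- A self-map of the torus is affine if it has the form `x ↦ M x + γ`, `M` integer. -/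
def IsAffT {n : ℕ} (f : Td n → Td n) : Prop := ∃ (M : Mat n) (γ : Td n), f = affT M γ

/-- A rank-one factor of the affine `ℤ²`-action generated by `A + α` and `B + β`: a factor
action on a quotient torus, induced by a surjective integer-linear projection intertwining
the action, whose image is contained in the group generated by a single affine map. -/
structure RankOneFactorData (d : ℕ) (A B : Mat d) (α β : Vec d) : Type where
  n : ℕ
  npos : 0 < n
  P : Matrix (Fin n) (Fin d) ℤ
  surj : Function.Surjective fun m : Fin d → ℤ => P.mulVec m
  A' : Mat n
  B' : Mat n
  α' : Td n
  β' : Td n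
  intertwineA : projT P ∘ affT A (toT α) = affT A' α' ∘ projT P
  intertwineB : projT P ∘ affT B (toT β) = affT B' β' ∘ projT P
  rankOne : ∃ c : Equiv.Perm (Td n), IsAffT (⇑c) ∧
      (∃ u : Equiv.Perm (Td n), u ∈ Subgroup.zpowers c ∧ ⇑u = affT A' α') ∧
      (∃ v : Equiv.Perm (Td n), v ∈ Subgroup.zpowers c ∧ ⇑v = affT B' β')

/-- The rank-one factor is the identity: both generators project to the identity. -/
def RankOneFactorData.IsIdentity {d : ℕ} {A B : Mat d} {α β : Vec d}
    (F : RankOneFactorData d A B α β) : Prop :=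
  affT F.A' F.α' = id ∧ affT F.B' F.β' = id

/-- The rank-one factor is genuinely parabolic: some generator projects to an affine map
with non-identity unipotent linear part. -/
def RankOneFactorData.IsGenuinelyParabolic {d : ℕ} {A B : Mat d} {α β : Vec d}
    (F : RankOneFactorData d A B α β) : Prop :=
  (IsParabolic F.A' ∧ F.A' ≠ 1) ∨ (IsParabolic F.B' ∧ F.B' ≠ 1)

/-- The linear action `⟨A, B⟩` is locked: every admissible affine action above it has a
rank-one factor that is the identity or genuinely parabolic. -/
def IsLocked {d : ℕ} (A B : Mat d) : Prop :=
  ∀ α β : Vec d, TAB A B α β →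
    ∃ F : RankOneFactorData d A B α β, F.IsIdentity ∨ F.IsGenuinelyParabolic

/-- `f : ℝ^d → ℝ^d` is `ℤ^d`-periodic. -/
def ZPeriodic {d : ℕ} (f : Vec d → Vec d) : Prop :=
  ∀ (x : Vec d) (v : IVec d), f (x + fun i => (v i : ℝ)) = f x

/-- The `C^r` norm of a map `ℝ^d → ℝ^d`. -/
noncomputable def crNorm {d : ℕ} (r : ℕ) (f : Vec d → Vec d) : ℝ :=
  ⨆ i : Fin (r + 1), ⨆ x : Vec d, ‖iteratedFDeriv ℝ (i : ℕ) f x‖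

/-- `f` has zero average over the fundamental domain. -/
def ZeroAvg {d : ℕ} (f : Vec d → Vec d) : Prop :=
  ∫ x in Set.Icc (0 : Vec d) 1, f x = 0

/-- KAM-rigidity, under volume preserving perturbations, of the affine `ℤ²`-action
generated by `a = A + α` and `b = B + β` (expressed on `ℤ^d`-periodic lifts to `ℝ^d`). -/
def KAMRigid {d : ℕ} (A B : Mat d) (α β : Vec d) : Prop :=
  ∃ σ r₀ : ℕ, σ ≤ r₀ ∧ ∃ ε : ℝ, 0 < ε ∧ ∃ C : ℝ, 0 < C ∧
    ∀ r : ℕ, r₀ ≤ r → ∀ f g : Vec d → Vec d,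
      ContDiff ℝ (⊤ : ℕ∞) f → ContDiff ℝ (⊤ : ℕ∞) g → ZPeriodic f → ZPeriodic g →
      (fun x => affR A α x + f x) ∘ (fun x => affR B β x + g x) =
        (fun x => affR B β x + g x) ∘ (fun x => affR A α x + f x) →
      MeasurePreserving (fun x => affR A α x + f x) volume volume →
      MeasurePreserving (fun x => affR B β x + g x) volume volume →
      crNorm r f ≤ ε → crNorm r g ≤ ε → ZeroAvg f → ZeroAvg g →
      ∃ h : Vec d → Vec d, ContDiff ℝ (⊤ : ℕ∞) h ∧ ZPeriodic h ∧
        crNorm (r - σ) h ≤ C * ε ∧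
        Function.Bijective (fun x : Vec d => x + h x) ∧
        MeasurePreserving (fun x : Vec d => x + h x) volume volume ∧
        (fun x : Vec d => x + h x) ∘ (fun x => affR A α x + f x) =
          affR A α ∘ (fun x : Vec d => x + h x) ∧
        (fun x : Vec d => x + h x) ∘ (fun x => affR B β x + g x) =
          affR B β ∘ (fun x : Vec d => x + h x)

/-- Ergodicity of the affine `ℤ²`-action with respect to Haar measure on the torus. -/
def JointlyErgodic {d : ℕ} (A B : Mat d) (α β : Vec d) : Prop :=
  ∀ s : Set (Td d), MeasurableSet s →
    affT A (toT α) ⁻¹' s = s → affT B (toT β) ⁻¹' s = s →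
    volume s = 0 ∨ volume sᶜ = 0

/-- The linear map whose kernel is the space `𝒯(A,B)` of admissible translation parts. -/
noncomputable def TABmap {d : ℕ} (A B : Mat d) : (Vec d × Vec d) →ₗ[ℝ] Vec d :=
  ((rmat (A - 1)).mulVecLin.comp (LinearMap.snd ℝ (Vec d) (Vec d))) -
    ((rmat (B - 1)).mulVecLin.comp (LinearMap.fst ℝ (Vec d) (Vec d)))

/-- The space `𝒯(A,B)` of admissible translation parts, as a subspace of `ℝ^d × ℝ^d`. -/
noncomputable def TABsub {d : ℕ} (A B : Mat d) : Submodule ℝ (Vec d × Vec d) :=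
  LinearMap.ker (TABmap A B)

/-- `e(m, x) = e^{2π i ⟨m, x⟩}`. -/
noncomputable def eF {d : ℕ} (m : IVec d) (x : Vec d) : ℂ :=
  Complex.exp (2 * (Real.pi : ℂ) * Complex.I * ∑ i, (m i : ℂ) * (x i : ℂ))

/-- `c : ℤ → ℤ → ℝ^d` is the family of translation parts `α_{k,l} = a^k b^l - A^k B^l`
of the elements of the affine action generated by `a = A + α` and `b = B + β`. -/
def IsTransFamily {d : ℕ} (A B : Mat d) (α β : Vec d) (c : ℤ → ℤ → Vec d) : Prop :=
  c 0 0 = 0 ∧ (∀ k l : ℤ, c (k + 1) l = α + (rmat A).mulVec (c k l)) ∧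
    ∀ k l : ℤ, c k (l + 1) = β + (rmat B).mulVec (c k l)

/-- The maximal translation factor of the action is `(γ,τ)`-simultaneously Diophantine. -/
def DiophTransFactor {d : ℕ} (γ τ : ℝ) (A B : Mat d) (α β : Vec d) : Prop :=
  ∀ m : IVec d, m ≠ 0 → (dual A).mulVec m = m → (dual B).mulVec m = m →
    γ / inorm m ^ τ < max ‖1 - eF m α‖ ‖1 - eF m β‖

/-- Every resonance of the action is `(γ,τ)`-Diophantine. -/
def DiophResonances {d : ℕ} (γ τ : ℝ) (A B : Mat d) (α β : Vec d) : Prop :=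
  ∀ (m : IVec d) (k l : ℤ), Resonant A B m → IsResPair A B m k l →
    ∀ c : ℤ → ℤ → Vec d, IsTransFamily A B α β c →
      γ / inorm m ^ τ < ‖1 - eF m (c k l)‖

/-- The affine action generated by `A + α`, `B + β` is `(γ,τ)`-Diophantine. -/
def DiophAction {d : ℕ} (γ τ : ℝ) (A B : Mat d) (α β : Vec d) : Prop :=
  DiophTransFactor γ τ A B α β ∧ DiophResonances γ τ A B α β

/-- The linearized coboundary operator `D h = h ∘ a - A h` above `a = A + α`. -/
def Dop {d : ℕ} (A : Mat d) (α : Vec d) (h : Vec d → Vec d) : Vec d → Vec d :=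
  fun x => h (affR A α x) - (rmat A).mulVec (h x)

/-- Generalized binomial coefficient `C(l, j) = l (l-1) ⋯ (l-j+1) / j!`
(a polynomial in `l` of degree `j`; the division is exact). -/
def zchoose (l : ℤ) (j : ℕ) : ℤ :=
  (∏ i ∈ Finset.range j, (l - (i : ℤ))) / (j.factorial : ℤ)



section Aux

lemma abs_entry_le_inorm {d : ℕ} (m : IVec d) (j : Fin d) : |(m j : ℝ)| ≤ inorm m := by
  rw [inorm, ← Real.sqrt_sq_eq_abs]
  apply Real.sqrt_le_sqrt
  exact Finset.single_le_sum (f := fun i => ((m i : ℝ)) ^ 2) (fun i _ => sq_nonneg _)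
    (Finset.mem_univ j)

lemma one_le_inorm {d : ℕ} (m : IVec d) (hm : m ≠ 0) : 1 ≤ inorm m := by
  obtain ⟨j, hj⟩ := Function.ne_iff.mp hm
  have h1 : (1 : ℝ) ≤ |(m j : ℝ)| := by
    have h2 : (1 : ℤ) ≤ |m j| := Int.one_le_abs (by simpa using hj)
    calc (1 : ℝ) ≤ (|m j| : ℝ) := by exact_mod_cast h2
      _ = |(m j : ℝ)| := by push_cast; ring
  exact h1.trans (abs_entry_le_inorm m j)

lemma mulVec_entry_le {d : ℕ} (M : Mat d) (m : IVec d) (i : Fin d) :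
    |((M.mulVec m i : ℤ) : ℝ)| ≤ (∑ j, |(M i j : ℝ)|) * inorm m := by
  have h0 : ((M.mulVec m i : ℤ) : ℝ) = ∑ j, (M i j : ℝ) * (m j : ℝ) := by
    simp [Matrix.mulVec, dotProduct]
  rw [h0]
  calc |∑ j, (M i j : ℝ) * (m j : ℝ)| ≤ ∑ j, |(M i j : ℝ) * (m j : ℝ)| :=
        Finset.abs_sum_le_sum_abs _ _
    _ ≤ ∑ j, |(M i j : ℝ)| * inorm m := by
        apply Finset.sum_le_sum
        intro j _
        rw [abs_mul]
        exact mul_le_mul_of_nonneg_left (abs_entry_le_inorm m j) (abs_nonneg _)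
    _ = (∑ j, |(M i j : ℝ)|) * inorm m := by rw [Finset.sum_mul]

end Aux

/-- **Lemma (resonance pairs are controlled by resonances).** Let `a = A + α` and
`b = B + β` be commuting affine parabolic maps. There is `C = C(A,B) > 0` such that for
every resonant vector `m` with associated resonance pair `(k,l)` one has
`C (|k| + |l|) ≤ |m|`. -/
theorem respair_le_resonance (d : ℕ) (A B : Mat d) (α β : Vec d)
    (hApar : IsParabolic A) (hBpar : IsParabolic B)
    (hcomm : A * B = B * A) (hTAB : TAB A B α β) :
    ∃ C : ℝ, 0 < C ∧ ∀ (m : IVec d) (k l : ℤ),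
      Resonant A B m → IsResPair A B m k l →
        C * (|(k : ℝ)| + |(l : ℝ)|) ≤ inorm m := by
  classical
  set S : ℝ := ∑ i, ∑ j, (|((hat A) i j : ℝ)| + |((hat B) i j : ℝ)|) with hSdef
  have hS : 0 ≤ S := by positivity
  refine ⟨(1 + 2 * S)⁻¹, by positivity, ?_⟩
  intro m k l hres hpair
  have hN1 : 1 ≤ inorm m := one_le_inorm m hres.1
  have hN0 : 0 ≤ inorm m := le_trans zero_le_one hN1
  have hpos : (0 : ℝ) < 1 + 2 * S := by positivity
  have htriv : (1 + 2 * S)⁻¹ * 1 ≤ inorm m := by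
    rw [inv_mul_le_iff₀ hpos]
    nlinarith
  obtain ⟨hnorm, heq⟩ := hpair
  set v := (hat A).mulVec m with hvdef
  set w := (hat B).mulVec m with hwdef
  have heq' : ∀ i, k * v i + l * w i = 0 := by
    intro i
    have h := congr_fun heq i
    simpa [smul_eq_mul] using h
  -- row-sum bounds
  have hrowA : ∀ i : Fin d, (∑ j, |((hat A) i j : ℝ)|) ≤ S := by
    intro i
    calc (∑ j, |((hat A) i j : ℝ)|) ≤ ∑ j, (|((hat A) i j : ℝ)| + |((hat B) i j : ℝ)|) := by
          apply Finset.sum_le_sum; intro j _; simp [abs_nonneg]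
      _ ≤ S := Finset.single_le_sum
          (f := fun i => ∑ j, (|((hat A) i j : ℝ)| + |((hat B) i j : ℝ)|))
          (fun i _ => by positivity) (Finset.mem_univ i)
  have hrowB : ∀ i : Fin d, (∑ j, |((hat B) i j : ℝ)|) ≤ S := by
    intro i
    calc (∑ j, |((hat B) i j : ℝ)|) ≤ ∑ j, (|((hat A) i j : ℝ)| + |((hat B) i j : ℝ)|) := by
          apply Finset.sum_le_sum; intro j _; simp [abs_nonneg]
      _ ≤ S := Finset.single_le_sum
          (f := fun i => ∑ j, (|((hat A) i j : ℝ)| + |((hat B) i j : ℝ)|))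
          (fun i _ => by positivity) (Finset.mem_univ i)
  have hvB : ∀ i : Fin d, |((v i : ℤ) : ℝ)| ≤ S * inorm m := fun i =>
    (mulVec_entry_le (hat A) m i).trans (mul_le_mul_of_nonneg_right (hrowA i) hN0)
  have hwB : ∀ i : Fin d, |((w i : ℤ) : ℝ)| ≤ S * inorm m := fun i =>
    (mulVec_entry_le (hat B) m i).trans (mul_le_mul_of_nonneg_right (hrowB i) hN0)
  rcases hnorm with ⟨hk, hl⟩ | ⟨hk, hl⟩ | ⟨hg, hk⟩
  · subst hk; subst hl; simpa using htriv
  · subst hk; subst hl; simpa using htriv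
  · by_cases hl0 : l = 0
    · subst hl0
      have hk1 : k = 1 := by
        have := hg
        simp [Int.gcd] at this
        omega
      subst hk1
      simpa using htriv
    · have hk0 : k ≠ 0 := hk.ne'
      have hco : IsCoprime k l := Int.isCoprime_iff_gcd_eq_one.mpr hg
      have hv : v ≠ 0 := by
        intro h0
        have hw0 : w = 0 := by
          funext i
          have h := heq' i
          rw [h0] at h
          simp at h
          rcases h with h | h
          · exact absurd h hl0
          · exact h
        rcases hres.2.2 with h | h
        · apply h
          have hsub : (dual A).mulVec m - m = v := by
            rw [hvdef, hat, Matrix.sub_mulVec, Matrix.one_mulVec]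
          rw [← sub_eq_zero, hsub, h0]
        · apply h
          have hsub : (dual B).mulVec m - m = w := by
            rw [hwdef, hat, Matrix.sub_mulVec, Matrix.one_mulVec]
          rw [← sub_eq_zero, hsub, hw0]
      obtain ⟨i, hvi⟩ := Function.ne_iff.mp hv
      have hwi : w i ≠ 0 := by
        intro h0
        have h := heq' i
        rw [h0] at h
        simp at h
        rcases h with h | h
        · exact hk0 h
        · exact hvi h
      have hkd : k ∣ w i := by
        have hmul : l * w i = k * (-v i) := by linear_combination heq' i
        exact hco.dvd_of_dvd_mul_left ⟨-v i, hmul⟩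
      have hld : l ∣ v i := by
        have hmul : k * v i = l * (-w i) := by linear_combination heq' i
        exact hco.symm.dvd_of_dvd_mul_left ⟨-w i, hmul⟩
      have hkle : |k| ≤ |w i| :=
        Int.le_of_dvd (abs_pos.mpr hwi) ((abs_dvd _ _).mpr ((dvd_abs _ _).mpr hkd))
      have hlle : |l| ≤ |v i| :=
        Int.le_of_dvd (abs_pos.mpr hvi) ((abs_dvd _ _).mpr ((dvd_abs _ _).mpr hld))
      have hkler : |(k : ℝ)| ≤ S * inorm m := by
        have : (|k| : ℝ) ≤ (|w i| : ℝ) := by exact_mod_cast hkle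
        calc |(k : ℝ)| = (|k| : ℝ) := by push_cast; ring
          _ ≤ (|w i| : ℝ) := this
          _ = |((w i : ℤ) : ℝ)| := by push_cast; ring
          _ ≤ S * inorm m := hwB i
      have hller : |(l : ℝ)| ≤ S * inorm m := by
        have : (|l| : ℝ) ≤ (|v i| : ℝ) := by exact_mod_cast hlle
        calc |(l : ℝ)| = (|l| : ℝ) := by push_cast; ring
          _ ≤ (|v i| : ℝ) := this
          _ = |((v i : ℤ) : ℝ)| := by push_cast; ring
          _ ≤ S * inorm m := hvB i
      rw [inv_mul_le_iff₀ hpos]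
      nlinarith


end ParabolicKAM
end

section
/- Let A ∈ SL(d,ℤ) be step-2 (so Ā = (Aᵀ)⁻¹ satisfies (Ā−Id)² = 0) and let m ∈ ℤ^d with Ām ≠ m. For every real r > 1 there exists c = c(r,A) > 0 such that: (i) if ⟨m, Âm⟩ > 0 then Σ_{k=0}^{∞} |Ā^k m|^{−r} ≤ c|m|^{−r+1}; (ii) if ⟨m, Âm⟩ < 0 then Σ_{k=−∞}^{−1} |Ā^k m|^{−r} ≤ c|m|^{−r+1}; (iii) if moreover m is the lowest point on its Ā-orbit, then Σ_{k=−∞}^{∞} |Ā^k m|^{−r} ≤ c|m|^{−r+1}. -/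
open MeasureTheory

namespace ParabolicKAM

section AuxLemmas

lemma iprod_self_nonneg {d : ℕ} (v : IVec d) : 0 ≤ iprod v v :=
  Finset.sum_nonneg fun _ _ => mul_self_nonneg _

lemma one_le_iprod_self {d : ℕ} {v : IVec d} (hv : v ≠ 0) : 1 ≤ iprod v v := by
  have h : 0 < iprod v v := by
    obtain ⟨i, hi⟩ := Function.ne_iff.mp hv
    exact Finset.sum_pos' (fun j _ => mul_self_nonneg _)
      ⟨i, Finset.mem_univ i, mul_self_pos.mpr (by simpa using hi)⟩
  omega

lemma inorm_eq_sqrt {d : ℕ} (v : IVec d) : inorm v = Real.sqrt ((iprod v v : ℤ) : ℝ) := by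
  unfold inorm iprod
  congr 1
  push_cast
  exact Finset.sum_congr rfl fun i _ => by ring

lemma iprod_add_smul {d : ℕ} (m n : IVec d) (k : ℤ) :
    iprod (m + k • n) (m + k • n) = iprod m m + 2*k*iprod m n + k^2 * iprod n n := by
  unfold iprod
  have h : ∀ i ∈ Finset.univ, (m + k • n) i * (m + k • n) i
      = m i * m i + (2*k) * (m i * n i) + k^2 * (n i * n i) := by
    intro i _
    simp only [Pi.add_apply, Pi.smul_apply, smul_eq_mul]
    ring
  rw [Finset.sum_congr rfl h, Finset.sum_add_distrib, Finset.sum_add_distrib,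
    ← Finset.mul_sum, ← Finset.mul_sum]

/-- telescoping estimate -/
lemma tele (r : ℝ) (hr : 1 < r) (a : ℝ) (ha : 0 < a) :
    (r - 1) * (a+1) ^ (-r) ≤ a ^ (1-r) - (a+1) ^ (1-r) := by
  have hb : (0:ℝ) < a + 1 := by linarith
  set t : ℝ := a / (a+1) with ht
  have ht0 : 0 < t := by positivity
  have ht1 : t < 1 := by rw [ht, div_lt_one hb]; linarith
  have h1 : 1 + (r-1)*(1-t) ≤ t ^ (1-r) := by
    rw [Real.rpow_def_of_pos ht0]
    have hl : Real.log t ≤ t - 1 := Real.log_le_sub_one_of_pos ht0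
    have he := Real.add_one_le_exp (Real.log t * (1-r))
    nlinarith [he, hl]
  have h2 : a ^ (1-r) = (a+1) ^ (1-r) * t ^ (1-r) := by
    rw [← Real.mul_rpow hb.le ht0.le]
    congr 1
    rw [ht]
    field_simp
  have h3 : (a+1) ^ (1-r) = (a+1) * (a+1) ^ (-r) := by
    rw [show (1-r) = 1 + (-r) by ring, Real.rpow_add hb, Real.rpow_one]
  have key : (a+1) * (1 - t) = 1 := by rw [ht]; field_simp; ring
  have h4 : (0:ℝ) < (a+1) ^ (-r) := Real.rpow_pos_of_pos hb _
  have h5 : (a+1) ^ (1-r) * (t ^ (1-r) - 1) ≥ (a+1) ^ (1-r) * ((r-1)*(1-t)) := by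
    apply mul_le_mul_of_nonneg_left (by linarith) (by positivity)
  have h6 : (a+1) ^ (1-r) * ((r-1)*(1-t)) = (r-1) * (a+1)^(-r) := by
    rw [h3]; linear_combination (r-1) * (a+1)^(-r) * key
  nlinarith [h5, h6, h2, h3]

lemma sum_bound (r : ℝ) (hr : 1 < r) (N : ℝ) (hN : 1 ≤ N) (n : ℕ) :
    ∑ k ∈ Finset.range n, (N + k) ^ (-r) ≤ N ^ (-r) + N ^ (1-r) / (r-1) := by
  have hN0 : 0 < N := by linarith
  have h3 : (0:ℝ) < r - 1 := by linarith
  have haux : ∀ m : ℕ, ∑ k ∈ Finset.range (m+1), (N + k) ^ (-r)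
      ≤ N ^ (-r) + (N ^ (1-r) - (N + m) ^ (1-r)) / (r-1) := by
    intro m
    induction m with
    | zero => simp
    | succ m ih =>
      rw [Finset.sum_range_succ]
      have ht := tele r hr (N + m) (by positivity)
      have h1 : (N + ((m:ℝ)+1)) ^ (-r) ≤ ((N+m) ^ (1-r) - (N+m+1) ^ (1-r)) / (r-1) := by
        rw [le_div_iff₀ (by linarith)]
        have : N + ((m:ℝ)+1) = (N + m) + 1 := by ring
        rw [this]
        nlinarith [ht]
      push_cast
      push_cast at ih
      have e : N + ((m:ℝ) + 1) = N + m + 1 := by ring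
      rw [e] at h1 ⊢
      have hdiv : (N ^ (1-r) - (N+m) ^ (1-r))/(r-1) + ((N+m) ^ (1-r) - (N+m+1) ^ (1-r))/(r-1)
          = (N ^ (1-r) - (N+m+1) ^ (1-r))/(r-1) := by ring
      linarith [ih, h1, hdiv]
  cases n with
  | zero =>
    simp only [Finset.range_zero, Finset.sum_empty]
    exact add_nonneg (Real.rpow_nonneg hN0.le _)
      (div_nonneg (Real.rpow_nonneg hN0.le _) h3.le)
  | succ m =>
    have := haux m
    have h2 : 0 ≤ (N + m) ^ (1-r) := Real.rpow_nonneg (by positivity) _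
    calc ∑ k ∈ Finset.range (m+1), (N + k) ^ (-r)
        ≤ N ^ (-r) + (N ^ (1-r) - (N + m) ^ (1-r)) / (r-1) := this
      _ ≤ N ^ (-r) + N ^ (1-r) / (r-1) := by
          have := (div_le_div_iff_of_pos_right h3).mpr
            (by linarith : N ^ (1-r) - (N + (m:ℝ)) ^ (1-r) ≤ N ^ (1-r))
          linarith

lemma key_sum (r : ℝ) (hr : 1 < r) (N : ℝ) (hN : 1 ≤ N) :
    ∑' k : ℕ, ENNReal.ofReal ((N + k) ^ (-r)) ≤
      ENNReal.ofReal ((1 + 1/(r-1)) * N ^ (1-r)) := by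
  apply ENNReal.tsum_le_of_sum_range_le
  intro n
  rw [← ENNReal.ofReal_sum_of_nonneg (fun k _ => Real.rpow_nonneg (by positivity) _)]
  apply ENNReal.ofReal_le_ofReal
  have h1 := sum_bound r hr N hN n
  have h2 : N ^ (-r) ≤ N ^ (1-r) := Real.rpow_le_rpow_of_exponent_le hN (by linarith)
  have h3 : (0:ℝ) < r - 1 := by linarith
  have e : (1 + 1/(r-1)) * N ^ (1-r) = N ^ (1-r) + N ^ (1-r)/(r-1) := by ring
  rw [e]
  linarith [h1, h2]

lemma term_le {N V : ℝ} (r : ℝ) (hr : 0 < r) (j : ℕ) (hN : 1 ≤ N)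
    (hV : ((N + j)/4)^2 ≤ V) : Real.sqrt V ^ (-r) ≤ 4 ^ r * (N + j) ^ (-r) := by
  have hNj : (0:ℝ) < N + j := by positivity
  have h1 : (N + j)/4 ≤ Real.sqrt V :=
    (Real.le_sqrt (by positivity) (le_trans (sq_nonneg _) hV)).mpr hV
  have h2 : Real.sqrt V ^ (-r) ≤ ((N + j)/4) ^ (-r) :=
    Real.rpow_le_rpow_of_nonpos (by positivity) h1 (by linarith)
  have h3 : ((N + j)/4) ^ (-r) = 4 ^ r * (N + j) ^ (-r) := by
    rw [Real.div_rpow hNj.le (by norm_num : (0:ℝ) ≤ 4), Real.rpow_neg hNj.le,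
      Real.rpow_neg (by norm_num : (0:ℝ) ≤ 4), div_eq_mul_inv, inv_inv]
    ring
  linarith

lemma ring2M {R : Type*} [Ring R] (x y : R) : (1 + x) * (1 + y) = 1 + x + y + x*y := by
  noncomm_ring

lemma ring3M {R : Type*} [Ring R] (x : R) : (1 + x) * (1 - x) = 1 - x*x := by noncomm_ring

section MatAux
variable {d : ℕ} (A : Mat d) (hA2 : (A - 1)^2 = 0)

include hA2

lemma transpose_step2 : (A.transpose - 1)^2 = 0 := by
  have h := congrArg Matrix.transpose hA2
  rwa [Matrix.transpose_pow, Matrix.transpose_sub, Matrix.transpose_one,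
    Matrix.transpose_zero] at h

lemma dual_eq : dual A = 2 - A.transpose := by
  apply Matrix.inv_eq_right_inv
  have e : A.transpose * (2 - A.transpose) = 1 - (A.transpose - 1)^2 := by
    noncomm_ring
  rw [e, transpose_step2 A hA2, sub_zero]

lemma hat_eq : hat A = 1 - A.transpose := by
  rw [hat, dual_eq A hA2, show (2 : Mat d) = 1 + 1 from one_add_one_eq_two.symm]
  abel

lemma hat_sq : hat A * hat A = 0 := by
  rw [hat_eq A hA2]
  have e2 : (1 - A.transpose) * (1 - A.transpose) = (A.transpose - 1)^2 := by noncomm_ring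
  rw [e2, transpose_step2 A hA2]

lemma dual_pow (n : ℕ) : (dual A) ^ n = 1 + (n : ℤ) • hat A := by
  have hd : dual A = 1 + hat A := by rw [hat]; noncomm_ring
  induction n with
  | zero => simp
  | succ n ih =>
    rw [pow_succ, ih, hd, ring2M, smul_mul_assoc, hat_sq A hA2, smul_zero, add_zero]
    push_cast
    rw [add_smul, one_smul, add_assoc]

lemma zpowM_dual_eq (k : ℤ) : zpowM (dual A) k = 1 + k • hat A := by
  cases k with
  | ofNat n =>
    show (dual A) ^ n = _
    rw [dual_pow A hA2]
    norm_cast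
  | negSucc n =>
    show ((dual A) ^ (n+1))⁻¹ = _
    rw [Int.negSucc_eq, neg_smul, ← sub_eq_add_neg]
    apply Matrix.inv_eq_right_inv
    rw [dual_pow A hA2]
    push_cast
    rw [ring3M, smul_mul_assoc, mul_smul_comm, hat_sq A hA2, smul_zero, smul_zero, sub_zero]

lemma zpowM_mulVec (k : ℤ) (m : Fin d → ℤ) :
    (zpowM (dual A) k).mulVec m = m + k • (hat A).mulVec m := by
  rw [zpowM_dual_eq A hA2, Matrix.add_mulVec, Matrix.one_mulVec, Matrix.smul_mulVec]

omit hA2 in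
lemma dual_mulVec (m : Fin d → ℤ) :
    (dual A).mulVec m = m + (hat A).mulVec m := by
  have hd : dual A = 1 + hat A := by rw [hat]; noncomm_ring
  rw [hd, Matrix.add_mulVec, Matrix.one_mulVec]

end MatAux

end AuxLemmas

set_option maxHeartbeats 2000000 in
/-- **Proposition (sums along the dual orbit of a step-2 matrix).** Let `A` be step-2
and `Ā m ≠ m`. For every `r > 1` there is `c = c(r,A) > 0` such that: if
`⟨m, Âm⟩ > 0` then `∑_{k≥0} |Ā^k m|^{-r} ≤ c |m|^{-r+1}`; if `⟨m, Âm⟩ < 0` then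
`∑_{k≤-1} |Ā^k m|^{-r} ≤ c |m|^{-r+1}`; and if moreover `m` is the lowest point on its
`Ā`-orbit, then `∑_{k∈ℤ} |Ā^k m|^{-r} ≤ c |m|^{-r+1}`. -/
theorem step2_orbit_sums (d : ℕ) (A : Mat d) (hdetA : A.det = 1) (hA2 : IsStep2 A)
    (r : ℝ) (hr : 1 < r) :
    ∃ c : ℝ, 0 < c ∧ ∀ m : IVec d, (dual A).mulVec m ≠ m →
      ((0 < iprod m ((hat A).mulVec m) →
          ∑' k : ℕ, ENNReal.ofReal (inorm ((zpowM (dual A) (k : ℤ)).mulVec m) ^ (-r)) ≤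
            ENNReal.ofReal (c * inorm m ^ (-r + 1))) ∧
        (iprod m ((hat A).mulVec m) < 0 →
          ∑' k : ℕ,
              ENNReal.ofReal (inorm ((zpowM (dual A) (-(k : ℤ) - 1)).mulVec m) ^ (-r)) ≤
            ENNReal.ofReal (c * inorm m ^ (-r + 1))) ∧
        (LowestOnOrbit A m →
          ∑' k : ℤ, ENNReal.ofReal (inorm ((zpowM (dual A) k).mulVec m) ^ (-r)) ≤
            ENNReal.ofReal (c * inorm m ^ (-r + 1)))) := by
  classical
  have hrm : (0:ℝ) < r - 1 := by linarith
  set C0 : ℝ := 1 + 1/(r-1) with hC0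
  have hC0pos : 0 < C0 := by
    have : 0 < 1/(r-1) := by positivity
    simp only [hC0]; linarith
  have h4r : (0:ℝ) < 4 ^ r := Real.rpow_pos_of_pos (by norm_num) r
  refine ⟨2 * 4 ^ r * C0, by positivity, ?_⟩
  intro m hm
  have hA2' : (A - 1)^2 = 0 := hA2.1
  set n0 : IVec d := (hat A).mulVec m with hn0def
  have hn0 : n0 ≠ 0 := by
    intro h
    apply hm
    rw [dual_mulVec, ← hn0def, h, add_zero]
  have hm0 : m ≠ 0 := by
    intro h
    apply hn0
    rw [hn0def, h, Matrix.mulVec_zero]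
  set Qr : ℝ := ((iprod m m : ℤ) : ℝ) with hQrdef
  set pr : ℝ := ((iprod m n0 : ℤ) : ℝ) with hprdef
  set qr : ℝ := ((iprod n0 n0 : ℤ) : ℝ) with hqrdef
  have hQr1 : 1 ≤ Qr := by
    rw [hQrdef]; exact_mod_cast one_le_iprod_self hm0
  have hqr1 : 1 ≤ qr := by
    rw [hqrdef]; exact_mod_cast one_le_iprod_self hn0
  set N : ℝ := inorm m with hNdef
  have hNQ : N = Real.sqrt Qr := by rw [hNdef, inorm_eq_sqrt]
  have hNsq : N^2 = Qr := by rw [hNQ]; exact Real.sq_sqrt (by linarith)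
  have hN1 : 1 ≤ N := by nlinarith [Real.sqrt_nonneg Qr, hNQ]
  have hN0 : 0 < N := by linarith
  have hval : ∀ k : ℤ, inorm (m + k • n0)
      = Real.sqrt (Qr + 2*(k:ℝ)*pr + (k:ℝ)^2*qr) := by
    intro k
    rw [inorm_eq_sqrt, iprod_add_smul]
    congr 1
    rw [hQrdef, hprdef, hqrdef]
    push_cast
    ring
  have hvalz : ∀ k : ℤ, inorm ((zpowM (dual A) k).mulVec m)
      = Real.sqrt (Qr + 2*(k:ℝ)*pr + (k:ℝ)^2*qr) := by
    intro k
    rw [zpowM_mulVec A hA2', ← hn0def, hval]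
  have hvnn : ∀ k : ℤ, (0:ℝ) ≤ Qr + 2*(k:ℝ)*pr + (k:ℝ)^2*qr := by
    intro k
    have h := iprod_self_nonneg (m + k • n0)
    rw [iprod_add_smul] at h
    rw [hQrdef, hprdef, hqrdef]
    exact_mod_cast h
  -- scaled sum bound
  have scaled : ∑' k : ℕ, ENNReal.ofReal (4^r * (N+k) ^ (-r))
      ≤ ENNReal.ofReal (4^r * C0 * N ^ (1-r)) := by
    calc ∑' k : ℕ, ENNReal.ofReal (4^r * (N+k) ^ (-r))
        = ∑' k : ℕ, ENNReal.ofReal (4^r) * ENNReal.ofReal ((N+k) ^ (-r)) :=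
          tsum_congr fun k => ENNReal.ofReal_mul h4r.le
      _ = ENNReal.ofReal (4^r) * ∑' k : ℕ, ENNReal.ofReal ((N+k) ^ (-r)) :=
          ENNReal.tsum_mul_left
      _ ≤ ENNReal.ofReal (4^r) * ENNReal.ofReal (C0 * N ^ (1-r)) :=
          mul_le_mul_right (key_sum r hr N hN1) _
      _ = ENNReal.ofReal (4^r * (C0 * N ^ (1-r))) := (ENNReal.ofReal_mul h4r.le).symm
      _ = ENNReal.ofReal (4^r * C0 * N ^ (1-r)) := by rw [mul_assoc]
  have hbound_pos : 0 ≤ 4^r * C0 * N ^ (1-r) := by positivity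
  have hfin : ENNReal.ofReal (4^r * C0 * N ^ (1-r))
      ≤ ENNReal.ofReal (2 * 4^r * C0 * N ^ (-r+1)) := by
    apply ENNReal.ofReal_le_ofReal
    rw [show -r+1 = 1-r by ring]
    nlinarith [Real.rpow_pos_of_pos hN0 (1-r), h4r, hC0pos]
  refine ⟨?_, ?_, ?_⟩
  · -- case (i): positive inner product, forward orbit
    intro hp
    have hpr1 : 1 ≤ pr := by
      rw [hprdef]; exact_mod_cast hp
    have hterm : ∀ k : ℕ,
        ENNReal.ofReal (inorm ((zpowM (dual A) (k:ℤ)).mulVec m) ^ (-r))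
          ≤ ENNReal.ofReal (4^r * (N+k) ^ (-r)) := by
      intro k
      rw [hvalz (k:ℤ)]
      apply ENNReal.ofReal_le_ofReal
      apply term_le r (by linarith) k hN1
      push_cast
      have e1 : (0:ℝ) ≤ (k:ℝ) * (pr - 1) :=
        mul_nonneg (Nat.cast_nonneg k) (by linarith)
      have e2 : (0:ℝ) ≤ (k:ℝ)^2 * (qr - 1) := mul_nonneg (sq_nonneg _) (by linarith)
      nlinarith [e1, e2, sq_nonneg (N - k), hNsq]
    calc ∑' k : ℕ, ENNReal.ofReal (inorm ((zpowM (dual A) (k:ℤ)).mulVec m) ^ (-r))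
        ≤ ∑' k : ℕ, ENNReal.ofReal (4^r * (N+k) ^ (-r)) := ENNReal.tsum_le_tsum hterm
      _ ≤ ENNReal.ofReal (4^r * C0 * N ^ (1-r)) := scaled
      _ ≤ ENNReal.ofReal (2 * 4^r * C0 * N ^ (-r+1)) := hfin
  · -- case (ii): negative inner product, backward orbit
    intro hp
    have hpr1 : pr ≤ -1 := by
      have h : iprod m n0 ≤ -1 := by omega
      rw [hprdef]; exact_mod_cast h
    have hterm : ∀ k : ℕ,
        ENNReal.ofReal (inorm ((zpowM (dual A) (-(k:ℤ)-1)).mulVec m) ^ (-r))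
          ≤ ENNReal.ofReal (4^r * (N+k) ^ (-r)) := by
      intro k
      rw [hvalz (-(k:ℤ)-1)]
      apply ENNReal.ofReal_le_ofReal
      apply term_le r (by linarith) k hN1
      push_cast
      have e1 : (0:ℝ) ≤ ((k:ℝ)+1) * (-pr - 1) :=
        mul_nonneg (by positivity) (by linarith)
      have e2 : (0:ℝ) ≤ ((k:ℝ)+1)^2 * (qr - 1) := mul_nonneg (sq_nonneg _) (by linarith)
      nlinarith [e1, e2, sq_nonneg (N - k), hNsq]
    calc ∑' k : ℕ, ENNReal.ofReal (inorm ((zpowM (dual A) (-(k:ℤ)-1)).mulVec m) ^ (-r))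
        ≤ ∑' k : ℕ, ENNReal.ofReal (4^r * (N+k) ^ (-r)) := ENNReal.tsum_le_tsum hterm
      _ ≤ ENNReal.ofReal (4^r * C0 * N ^ (1-r)) := scaled
      _ ≤ ENNReal.ofReal (2 * 4^r * C0 * N ^ (-r+1)) := hfin
  · -- case (iii): lowest point on orbit, full sum
    intro hlow
    have sqle : ∀ k : ℤ, N ≤ inorm (m + k • n0) →
        N^2 ≤ Qr + 2*(k:ℝ)*pr + (k:ℝ)^2*qr := by
      intro k hk
      rw [hval k] at hk
      have h2 := pow_le_pow_left₀ hN0.le hk 2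
      rwa [Real.sq_sqrt (hvnn k)] at h2
    have hc1 : 0 ≤ 2*pr + qr := by
      have h := sqle 1 (hlow 1)
      push_cast at h
      nlinarith [hNsq]
    have hc2 : 0 ≤ -2*pr + qr := by
      have h := sqle (-1) (hlow (-1))
      push_cast at h
      nlinarith [hNsq]
    set f : ℤ → ENNReal :=
      fun k => ENNReal.ofReal (inorm ((zpowM (dual A) k).mulVec m) ^ (-r)) with hf
    have hsplit : ∑' k : ℤ, f k = (∑' n : ℕ, f n) + ∑' n : ℕ, f (-(n+1)) := by
      rw [← tsum_nat_add_neg_add_one ENNReal.summable, ENNReal.tsum_add]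
    have htermp : ∀ k : ℕ, f (k:ℤ) ≤ ENNReal.ofReal (4^r * (N+k) ^ (-r)) := by
      intro k
      rw [hf]
      simp only
      rw [hvalz (k:ℤ)]
      apply ENNReal.ofReal_le_ofReal
      apply term_le r (by linarith) k hN1
      push_cast
      have hjj : (0:ℝ) ≤ (k:ℝ)^2 - k := by
        have h := Nat.le_self_pow two_ne_zero k
        have : (k:ℝ) ≤ (k:ℝ)^2 := by exact_mod_cast h
        linarith
      have e1 : (0:ℝ) ≤ (k:ℝ) * (2*pr + qr) := mul_nonneg (Nat.cast_nonneg k) hc1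
      have e2 : (0:ℝ) ≤ ((k:ℝ)^2 - k) * (qr - 1) := mul_nonneg hjj (by linarith)
      have hN2 : (1:ℝ) ≤ N^2 := by nlinarith [hN1]
      have expand : ((N+(k:ℝ))/4)^2 = (N^2 + 2*N*k + k^2)/16 := by ring
      rw [expand, div_le_iff₀ (by norm_num : (0:ℝ) < 16)]
      have s1 : (0:ℝ) ≤ (N-(k:ℝ))^2 := sq_nonneg _
      have s1' : N^2 - 2*N*(k:ℝ) + k^2 = (N-(k:ℝ))^2 := by ring
      have s2 : (0:ℝ) ≤ (7*(k:ℝ)-4)^2 := sq_nonneg _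
      have s2' : 49*(k:ℝ)^2 - 56*k + 16 = (7*(k:ℝ)-4)^2 := by ring
      have e1' : (k:ℝ) * (2*pr + qr) = 2*(k*pr) + k*qr := by ring
      have e2' : ((k:ℝ)^2 - k) * (qr - 1) = k^2*qr - k^2 - k*qr + k := by ring
      linarith [e1, e2, s1, s2, hNsq, hN2, s1', s2', e1', e2']
    have htermn : ∀ k : ℕ, f (-((k:ℤ)+1)) ≤ ENNReal.ofReal (4^r * (N+k) ^ (-r)) := by
      intro k
      rw [hf]
      simp only
      rw [hvalz (-((k:ℤ)+1))]
      apply ENNReal.ofReal_le_ofReal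
      apply term_le r (by linarith) k hN1
      push_cast
      have hjj : (0:ℝ) ≤ (k:ℝ)^2 + k := by positivity
      have e1 : (0:ℝ) ≤ ((k:ℝ)+1) * (-2*pr + qr) := mul_nonneg (by positivity) hc2
      have e2 : (0:ℝ) ≤ ((k:ℝ)^2 + k) * (qr - 1) := mul_nonneg hjj (by linarith)
      nlinarith [e1, e2, sq_nonneg (N - k), hNsq]
    have hB1 : (∑' n : ℕ, f n) ≤ ENNReal.ofReal (4^r * C0 * N ^ (1-r)) :=
      le_trans (ENNReal.tsum_le_tsum htermp) scaled
    have hB2 : (∑' n : ℕ, f (-(n+1))) ≤ ENNReal.ofReal (4^r * C0 * N ^ (1-r)) := by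
      refine le_trans (ENNReal.tsum_le_tsum ?_) scaled
      intro k
      exact htermn k
    calc ∑' k : ℤ, f k ≤ ENNReal.ofReal (4^r * C0 * N ^ (1-r))
          + ENNReal.ofReal (4^r * C0 * N ^ (1-r)) := by
          rw [hsplit]; exact add_le_add hB1 hB2
      _ = ENNReal.ofReal (4^r * C0 * N ^ (1-r) + 4^r * C0 * N ^ (1-r)) :=
          (ENNReal.ofReal_add hbound_pos hbound_pos).symm
      _ ≤ ENNReal.ofReal (2 * 4^r * C0 * N ^ (-r+1)) := by
          apply ENNReal.ofReal_le_ofReal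
          rw [show -r+1 = 1-r by ring]
          ring_nf
          exact le_refl _


end ParabolicKAM
end

section
/- Let a = A+α and b = B+β be commuting affine parabolic maps of T^d with A step-2, and suppose the affine action ⟨a,b⟩ has no rank-one factor which is the identity or genuinely parabolic (i.e. no rank-one factor other than a translation). Then for any m ∈ ℤ^d, if B̂²m ≠ 0 then Âm ≠ 0. -/
open MeasureTheory

namespace ParabolicKAM

open Matrix

/-! ### Auxiliary material for the proof of `hatA_ne_zero_of_hatB_sq_ne_zero` -/

lemma unipotent_inv {n : ℕ} {M : Mat n} {S : ℕ} (hS : (M - 1) ^ S = 0) :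
    ∃ C : Mat n, C * M = 1 ∧ M * C = 1 := by
  have hx : (1 - M) ^ S = 0 := by rw [← neg_sub M 1, neg_pow, hS, mul_zero]
  have hCM : (∑ i ∈ Finset.range S, (1 - M) ^ i) * M = 1 := by
    have hg := geom_sum_mul (1 - M) S
    rw [hx] at hg
    have h2 : ((1 : Mat n) - M - 1) = -M := by abel
    rw [h2, mul_neg, zero_sub, neg_inj] at hg
    exact hg
  have hcom : Commute M (∑ i ∈ Finset.range S, (1 - M) ^ i) :=
    Commute.sum_right _ _ _ fun i _ =>
      ((Commute.one_right M).sub_right (Commute.refl M)).pow_right i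
  exact ⟨_, hCM, by rw [hcom.eq, hCM]⟩

lemma isUnit_det_of_parabolic {d : ℕ} {A : Mat d} (h : IsParabolic A) : IsUnit A.det := by
  obtain ⟨S, hS⟩ := h
  obtain ⟨C, _, hC2⟩ := unipotent_inv hS
  exact Matrix.isUnit_det_of_right_inverse hC2

/-- The saturation of a submodule of `ℤ^d`. -/
def satur {d : ℕ} (N : Submodule ℤ (IVec d)) : Submodule ℤ (IVec d) where
  carrier := {x | ∃ k : ℤ, k ≠ 0 ∧ k • x ∈ N}
  zero_mem' := ⟨1, one_ne_zero, by simp⟩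
  add_mem' := by
    rintro a b ⟨k, hk, hka⟩ ⟨l, hl, hlb⟩
    refine ⟨k * l, mul_ne_zero hk hl, ?_⟩
    have h1 : (k * l) • (a + b) = l • (k • a) + k • (l • b) := by
      rw [smul_add, smul_smul, smul_smul, mul_comm l k]
    rw [h1]
    exact Submodule.add_mem _ (Submodule.smul_mem _ _ hka) (Submodule.smul_mem _ _ hlb)
  smul_mem' := by
    rintro c x ⟨k, hk, hkx⟩
    refine ⟨k, hk, ?_⟩
    rw [smul_comm]
    exact Submodule.smul_mem _ _ hkx

lemma mem_satur {d : ℕ} {N : Submodule ℤ (IVec d)} {x : IVec d} :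
    x ∈ satur N ↔ ∃ k : ℤ, k ≠ 0 ∧ k • x ∈ N := Iff.rfl

lemma projT_sum {n d e : ℕ} (Q : Matrix (Fin n) (Fin d) ℤ) (P : Matrix (Fin d) (Fin e) ℤ)
    (x : Td e) (i : Fin n) :
    ∑ j, Q i j • (∑ k, P j k • x k) = ∑ k, (Q * P) i k • x k := by
  simp_rw [Finset.smul_sum, smul_smul, Matrix.mul_apply, Finset.sum_smul]
  exact Finset.sum_comm

lemma coe_sum_smul {n d : ℕ} (P : Matrix (Fin n) (Fin d) ℤ) (γ : Vec d) (i : Fin n) :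
    ∑ j, P i j • ((γ j : ℝ) : AddCircle (1 : ℝ)) =
      ((∑ j, (P i j : ℝ) * γ j : ℝ) : AddCircle (1 : ℝ)) := by
  have h : ∀ r : ℝ, ((r : ℝ) : AddCircle (1 : ℝ)) =
      QuotientAddGroup.mk' (AddSubgroup.zmultiples (1 : ℝ)) r := fun _ => rfl
  rw [h (∑ j, (P i j : ℝ) * γ j), map_sum]
  refine Finset.sum_congr rfl fun j _ => ?_
  rw [h (γ j), ← map_zsmul]
  congr 1
  rw [zsmul_eq_mul]

lemma projT_one {n : ℕ} (x : Td n) : projT (1 : Mat n) x = x := by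
  funext i
  simp [projT, Matrix.one_apply, ite_smul]

lemma projT_comp {n d e : ℕ} (Q : Matrix (Fin n) (Fin d) ℤ) (P : Matrix (Fin d) (Fin e) ℤ)
    (x : Td e) : projT Q (projT P x) = projT (Q * P) x := by
  funext i
  exact projT_sum Q P x i

lemma affT_one_zero {n : ℕ} : affT (1 : Mat n) (0 : Td n) = id := by
  funext x i
  show (∑ j, (1 : Mat n) i j • x j) + (0 : Td n) i = x i
  rw [Pi.zero_apply, add_zero]
  exact congrFun (projT_one x) i

lemma projT_affT {n d : ℕ} (P : Matrix (Fin n) (Fin d) ℤ) (M : Mat d) (γ : Vec d) (x : Td d) :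
    projT P (affT M (toT γ) x) =
      fun i => (∑ k, (P * M) i k • x k) +
        ((∑ j, (P i j : ℝ) * γ j : ℝ) : AddCircle (1 : ℝ)) := by
  funext i
  show ∑ j, P i j • ((∑ k, M j k • x k) + ((γ j : ℝ) : AddCircle (1 : ℝ))) = _
  rw [Finset.sum_congr rfl fun j _ => smul_add (P i j) _ _, Finset.sum_add_distrib,
    projT_sum, coe_sum_smul]

lemma affT_projT {n d : ℕ} (Q : Mat n) (P : Matrix (Fin n) (Fin d) ℤ) (γ : Td n) (x : Td d) :
    affT Q γ (projT P x) = fun i => (∑ k, (Q * P) i k • x k) + γ i := by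
  funext i
  show (∑ j, Q i j • (∑ k, P j k • x k)) + γ i = _
  rw [projT_sum]

lemma ivec_decomp {d : ℕ} (x : IVec d) : x = ∑ j, x j • Pi.single j (1 : ℤ) := by
  funext i
  rw [Finset.sum_apply]
  simp [Pi.single_apply]

/-- **Lemma.** Let `a = A+α`, `b = B+β` be commuting affine parabolic maps with `A`
step-2, and suppose the affine action `⟨a,b⟩` has no rank-one factor which is the
identity or genuinely parabolic. If `B̂² m ≠ 0`, then `Â m ≠ 0`. -/
theorem hatA_ne_zero_of_hatB_sq_ne_zero (d : ℕ) (A B : Mat d) (α β : Vec d)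
    (hApar : IsParabolic A) (hBpar : IsParabolic B) (hA2 : IsStep2 A)
    (hcomm : A * B = B * A) (hTAB : TAB A B α β)
    (hnofactor : ¬ ∃ F : RankOneFactorData d A B α β,
      F.IsIdentity ∨ F.IsGenuinelyParabolic) :
    ∀ m : IVec d, ((hat B) ^ 2).mulVec m ≠ 0 → (hat A).mulVec m ≠ 0 := by
  classical
  intro m hB2m hA0
  set At := A.transpose with hAtdef
  set Bt := B.transpose with hBtdef
  have hdetAt : IsUnit At.det := by
    rw [hAtdef, Matrix.det_transpose]; exact isUnit_det_of_parabolic hApar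
  have hdetBt : IsUnit Bt.det := by
    rw [hBtdef, Matrix.det_transpose]; exact isUnit_det_of_parabolic hBpar
  have hAtBt : At * Bt = Bt * At := by
    rw [hAtdef, hBtdef, ← Matrix.transpose_mul, ← Matrix.transpose_mul, hcomm]
  -- `m` is fixed by `Aᵀ`
  have hA0' : (At⁻¹ - 1) *ᵥ m = 0 := hA0
  have hAinvm : At⁻¹ *ᵥ m = m := by
    rwa [Matrix.sub_mulVec, Matrix.one_mulVec, sub_eq_zero] at hA0'
  have hAm : At *ᵥ m = m := by
    conv_lhs => rw [← hAinvm]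
    rw [Matrix.mulVec_mulVec, Matrix.mul_nonsing_inv _ hdetAt, Matrix.one_mulVec]
  -- `(Bᵀ - 1)² m ≠ 0`
  have hm2 : (Bt - 1) *ᵥ ((Bt - 1) *ᵥ m) ≠ 0 := by
    intro h0
    apply hB2m
    rw [Matrix.mulVec_mulVec] at h0
    have h1 : Bt⁻¹ * Bt = 1 := Matrix.nonsing_inv_mul _ hdetBt
    have hc : ∀ X : Mat d, Bt⁻¹ * (Bt * X) = X := fun X => by rw [← mul_assoc, h1, one_mul]
    have key : hat B * hat B = Bt⁻¹ * Bt⁻¹ * ((Bt - 1) * (Bt - 1)) := by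
      show (Bt⁻¹ - 1) * (Bt⁻¹ - 1) = _
      simp only [mul_sub, sub_mul, mul_one, one_mul, mul_assoc, h1, hc]
      abel
    calc (hat B ^ 2) *ᵥ m = (Bt⁻¹ * Bt⁻¹) *ᵥ (((Bt - 1) * (Bt - 1)) *ᵥ m) := by
          rw [pow_two, key, Matrix.mulVec_mulVec]
      _ = 0 := by rw [h0, Matrix.mulVec_zero]
  -- commutation identities
  have hABcm : (At - 1) * (Bt - 1) = (Bt - 1) * (At - 1) := by
    have h1 : (At - 1) * (Bt - 1) = At * Bt - At - Bt + 1 := by noncomm_ring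
    have h2 : (Bt - 1) * (At - 1) = Bt * At - Bt - At + 1 := by noncomm_ring
    rw [h1, h2, hAtBt]; abel
  have hABcm2 : (At - 1) * Bt = Bt * (At - 1) := by
    have h1 : (At - 1) * Bt = At * Bt - Bt := by noncomm_ring
    have h2 : Bt * (At - 1) = Bt * At - Bt := by noncomm_ring
    rw [h1, h2, hAtBt]
  have hBcm : Bt * (Bt - 1) = (Bt - 1) * Bt := by noncomm_ring
  -- the sublattice Λ
  let LA : IVec d →ₗ[ℤ] IVec d := (At - 1).mulVecLin
  let LB : IVec d →ₗ[ℤ] IVec d := (Bt - 1).mulVecLin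
  let F0 : Submodule ℤ (IVec d) := LinearMap.ker LA
  let Λ0 : Submodule ℤ (IVec d) := F0.map LB
  let Λ : Submodule ℤ (IVec d) := satur Λ0
  have memΛ0 : ∀ x : IVec d,
      x ∈ Λ0 ↔ ∃ q, (At - 1) *ᵥ q = 0 ∧ (Bt - 1) *ᵥ q = x := by
    intro x
    simp only [Λ0, F0, Submodule.mem_map, LinearMap.mem_ker, LA, LB,
      Matrix.mulVecLin_apply]
  have memΛ : ∀ x : IVec d, x ∈ Λ ↔ ∃ k : ℤ, k ≠ 0 ∧ k • x ∈ Λ0 := fun x => Iff.rfl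
  have hΛF : ∀ x ∈ Λ, (At - 1) *ᵥ x = 0 := by
    rintro x ⟨k, hk, hkx⟩
    obtain ⟨q, hq1, hq2⟩ := (memΛ0 _).1 hkx
    have h1 : (At - 1) *ᵥ (k • x) = 0 := by
      rw [← hq2, Matrix.mulVec_mulVec, hABcm, ← Matrix.mulVec_mulVec, hq1,
        Matrix.mulVec_zero]
    rw [Matrix.mulVec_smul] at h1
    exact (smul_eq_zero.1 h1).resolve_left hk
  have hΛB : ∀ x ∈ Λ, Bt *ᵥ x ∈ Λ := by
    rintro x ⟨k, hk, hkx⟩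
    obtain ⟨q, hq1, hq2⟩ := (memΛ0 _).1 hkx
    refine ⟨k, hk, (memΛ0 _).2 ⟨Bt *ᵥ q, ?_, ?_⟩⟩
    · rw [Matrix.mulVec_mulVec, hABcm2, ← Matrix.mulVec_mulVec, hq1, Matrix.mulVec_zero]
    · rw [Matrix.mulVec_mulVec, ← hBcm, ← Matrix.mulVec_mulVec, hq2, Matrix.mulVec_smul]
  have hmF0 : (At - 1) *ᵥ m = 0 := by
    rw [Matrix.sub_mulVec, Matrix.one_mulVec, hAm, sub_self]
  have hm1Λ : (Bt - 1) *ᵥ m ∈ Λ :=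
    ⟨1, one_ne_zero, by rw [one_smul]; exact (memΛ0 _).2 ⟨m, hmF0, rfl⟩⟩
  have hm1ne : (Bt - 1) *ᵥ m ≠ 0 := fun h => hm2 (by rw [h, Matrix.mulVec_zero])
  -- the pairing with α vanishes on Λ
  have hpair0 : ∀ x ∈ Λ0, ∑ j, (x j : ℝ) * α j = 0 := by
    intro x hx
    obtain ⟨q, hq1, rfl⟩ := (memΛ0 x).1 hx
    have hTAB' : ∀ k, (∑ j, ((A - 1) k j : ℝ) * β j) = ∑ j, ((B - 1) k j : ℝ) * α j := by
      intro k
      have h := congrFun hTAB k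
      simpa [rmat, Matrix.mulVec, dotProduct, Matrix.map_apply] using h
    have hq1' : ∑ j, ((((At - 1) *ᵥ q) j : ℤ) : ℝ) * β j = 0 := by
      rw [hq1]; simp
    calc ∑ j, ((((Bt - 1) *ᵥ q) j : ℤ) : ℝ) * α j
        = ∑ j, ∑ k, (q k : ℝ) * (((B - 1) k j : ℝ) * α j) := by
          refine Finset.sum_congr rfl fun j _ => ?_
          rw [show ((Bt - 1) *ᵥ q) j = ∑ k, (B k j - if j = k then 1 else 0) * q k by
            simp [Matrix.mulVec, dotProduct, Matrix.sub_apply, hBtdef,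
              Matrix.transpose_apply, Matrix.one_apply]]
          push_cast
          rw [Finset.sum_mul]
          refine Finset.sum_congr rfl fun k _ => ?_
          have : ((B - 1) k j : ℤ) = B k j - if j = k then 1 else 0 := by
            simp [Matrix.sub_apply, Matrix.one_apply, eq_comm]
          rw [this]
          push_cast
          ring
      _ = ∑ k, (q k : ℝ) * (∑ j, ((B - 1) k j : ℝ) * α j) := by
          rw [Finset.sum_comm]
          exact Finset.sum_congr rfl fun k _ => (Finset.mul_sum _ _ _).symm
      _ = ∑ k, (q k : ℝ) * (∑ j, ((A - 1) k j : ℝ) * β j) := by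
          refine Finset.sum_congr rfl fun k _ => ?_
          rw [hTAB' k]
      _ = ∑ j, ((((At - 1) *ᵥ q) j : ℤ) : ℝ) * β j := by
          simp_rw [Finset.mul_sum]
          rw [Finset.sum_comm]
          refine Finset.sum_congr rfl fun j _ => ?_
          rw [show ((At - 1) *ᵥ q) j = ∑ k, (A k j - if j = k then 1 else 0) * q k by
            simp [Matrix.mulVec, dotProduct, Matrix.sub_apply, hAtdef,
              Matrix.transpose_apply, Matrix.one_apply]]
          push_cast
          rw [Finset.sum_mul]
          refine Finset.sum_congr rfl fun k _ => ?_
          have : ((A - 1) k j : ℤ) = A k j - if j = k then 1 else 0 := by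
            simp [Matrix.sub_apply, Matrix.one_apply, eq_comm]
          rw [this]
          push_cast
          ring
      _ = 0 := hq1'
  have hpairΛ : ∀ x ∈ Λ, ∑ j, (x j : ℝ) * α j = 0 := by
    rintro x ⟨k, hk, hkx⟩
    have h0 := hpair0 _ hkx
    have h1 : ∑ j, (((k • x) j : ℤ) : ℝ) * α j = (k : ℝ) * ∑ j, (x j : ℝ) * α j := by
      rw [Finset.mul_sum]
      refine Finset.sum_congr rfl fun j _ => ?_
      have : ((k • x) j : ℤ) = k * x j := rfl
      rw [this]
      push_cast
      ring
    rw [h1] at h0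
    rcases mul_eq_zero.1 h0 with h | h
    · exact absurd (by exact_mod_cast h) hk
    · exact h
  -- the quotient is torsion-free, hence free; get a retraction onto Λ
  haveI : NoZeroSMulDivisors ℤ (IVec d ⧸ Λ) := by
    refine ⟨fun {c x} hcx => ?_⟩
    by_cases hc : c = 0
    · exact Or.inl hc
    obtain ⟨y, rfl⟩ := Submodule.Quotient.mk_surjective Λ x
    right
    rw [← Submodule.Quotient.mk_smul, Submodule.Quotient.mk_eq_zero] at hcx
    obtain ⟨k, hk, hkcy⟩ := hcx
    rw [Submodule.Quotient.mk_eq_zero]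
    refine ⟨k * c, mul_ne_zero hk hc, ?_⟩
    rwa [mul_smul]
  haveI : Module.Finite ℤ (IVec d ⧸ Λ) :=
    Module.Finite.of_surjective Λ.mkQ (Submodule.mkQ_surjective Λ)
  haveI : Module.Free ℤ (IVec d ⧸ Λ) := Module.free_of_finite_type_torsion_free'
  obtain ⟨σ, hσ⟩ := Module.projective_lifting_property Λ.mkQ LinearMap.id
    (Submodule.mkQ_surjective Λ)
  let f0 : IVec d →ₗ[ℤ] IVec d := LinearMap.id - σ ∘ₗ Λ.mkQ
  have hrmem : ∀ x : IVec d, f0 x ∈ Λ := by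
    intro x
    have h1 : Λ.mkQ (x - σ (Λ.mkQ x)) = 0 := by
      rw [map_sub]
      have h2 : Λ.mkQ (σ (Λ.mkQ x)) = Λ.mkQ x := by
        have h3 := congrFun (congrArg DFunLike.coe hσ) (Λ.mkQ x)
        simpa using h3
      rw [h2, sub_self]
    rwa [Submodule.mkQ_apply, Submodule.Quotient.mk_eq_zero] at h1
  let rl : IVec d →ₗ[ℤ] ↥Λ := LinearMap.codRestrict Λ f0 hrmem
  have hrlΛ : ∀ x : IVec d, x ∈ Λ → ((rl x : IVec d)) = x := by
    intro x hx
    have h0 : Λ.mkQ x = 0 := by rwa [Submodule.mkQ_apply, Submodule.Quotient.mk_eq_zero]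
    show x - σ (Λ.mkQ x) = x
    rw [h0, map_zero, sub_zero]
  -- a basis of Λ
  obtain ⟨n, bN⟩ := Submodule.basisOfPid (Pi.basisFun ℤ (Fin d)) Λ
  have hnpos : 0 < n := by
    rcases Nat.eq_zero_or_pos n with h0 | h
    · exfalso
      apply hm1ne
      have h1 := bN.sum_repr ⟨(Bt - 1) *ᵥ m, hm1Λ⟩
      subst h0
      rw [Finset.univ_eq_empty, Finset.sum_empty] at h1
      have h2 := congrArg Subtype.val h1
      simpa using h2.symm
    · exact h
  -- the projection matrix and its surjectivity
  let P : Matrix (Fin n) (Fin d) ℤ := Matrix.of fun i j => (bN i : IVec d) j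
  have hPsurj : Function.Surjective fun v : IVec d => P *ᵥ v := by
    intro t
    let φ : ↥Λ →ₗ[ℤ] ℤ := ∑ i, t i • bN.coord i
    let Φ : IVec d →ₗ[ℤ] ℤ := φ ∘ₗ rl
    refine ⟨fun j => Φ (Pi.single j 1), ?_⟩
    funext i
    have hx : ∀ x : IVec d, ∑ j, x j * Φ (Pi.single j 1) = Φ x := by
      intro x
      conv_rhs => rw [ivec_decomp x, map_sum]
      refine Finset.sum_congr rfl fun j _ => ?_
      rw [_root_.map_smul, smul_eq_mul]
    have h1 : (P *ᵥ fun j => Φ (Pi.single j 1)) i = Φ ((bN i : IVec d)) := hx _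
    have h2 : Φ ((bN i : IVec d)) = t i := by
      have hr : rl ((bN i : IVec d)) = bN i := Subtype.ext (hrlΛ _ (bN i).2)
      show φ (rl ((bN i : IVec d))) = t i
      rw [hr]
      simp only [φ, LinearMap.sum_apply, LinearMap.smul_apply, Module.Basis.coord_apply,
        Module.Basis.repr_self, smul_eq_mul]
      simp [Finsupp.single_apply]
    exact h1.trans h2
  -- the rows of P are fixed by Aᵀ …
  have hrowA : ∀ i : Fin n, At *ᵥ ((bN i : IVec d)) = (bN i : IVec d) := by
    intro i
    have h1 := hΛF _ (bN i).2
    rwa [Matrix.sub_mulVec, Matrix.one_mulVec, sub_eq_zero] at h1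
  have hPA : P * A = P := by
    ext i j
    rw [Matrix.mul_apply]
    have h1 := congrFun (hrowA i) j
    have h2 : ∑ k, B.transpose j k * 0 = 0 := by simp
    have h3 : (At *ᵥ (bN i : IVec d)) j = ∑ k, A k j * (bN i : IVec d) k := by
      simp [Matrix.mulVec, dotProduct, hAtdef, Matrix.transpose_apply]
    rw [h3] at h1
    calc ∑ k, P i k * A k j = ∑ k, A k j * (bN i : IVec d) k := by
          refine Finset.sum_congr rfl fun k _ => ?_
          show (bN i : IVec d) k * A k j = _
          ring
      _ = P i j := h1
  -- … and Λ is invariant under Bᵀ, giving B'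
  let vB : Fin n → ↥Λ := fun i => ⟨Bt *ᵥ (bN i : IVec d), hΛB _ (bN i).2⟩
  let B' : Mat n := Matrix.of fun i k => bN.repr (vB i) k
  have hPB : P * B = B' * P := by
    ext i j
    have hsum := bN.sum_repr (vB i)
    have hval : ∑ k, (bN.repr (vB i) k) • ((bN k : IVec d)) = Bt *ᵥ (bN i : IVec d) := by
      have h4 := congrArg (Λ.subtype) hsum
      simpa only [map_sum, _root_.map_smul, Submodule.subtype_apply] using h4
    have hj := congrFun hval j
    rw [Finset.sum_apply] at hj
    simp only [Pi.smul_apply, smul_eq_mul] at hj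
    rw [Matrix.mul_apply, Matrix.mul_apply]
    have hL : ∑ k, P i k * B k j = (Bt *ᵥ (bN i : IVec d)) j := by
      rw [show (Bt *ᵥ (bN i : IVec d)) j = ∑ k, B k j * (bN i : IVec d) k by
        simp [Matrix.mulVec, dotProduct, hBtdef, Matrix.transpose_apply]]
      refine Finset.sum_congr rfl fun k _ => ?_
      show (bN i : IVec d) k * B k j = _
      ring
    rw [hL, ← hj]
    exact Finset.sum_congr rfl fun k _ => rfl
  -- B' is parabolic and not the identity
  obtain ⟨S, hSpar⟩ := hBpar
  have hstep : (B' - 1) * P = P * (B - 1) := by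
    rw [Matrix.sub_mul, Matrix.mul_sub, Matrix.one_mul, Matrix.mul_one, hPB]
  have hpowPB : ∀ s : ℕ, (B' - 1) ^ s * P = P * (B - 1) ^ s := by
    intro s
    induction s with
    | zero => simp
    | succ k ih => rw [pow_succ, pow_succ, Matrix.mul_assoc, hstep, ← Matrix.mul_assoc, ih, Matrix.mul_assoc]
  have hB'nil : (B' - 1) ^ S = 0 := by
    have h0 : (B' - 1) ^ S * P = 0 := by rw [hpowPB, hSpar, Matrix.mul_zero]
    ext i j
    obtain ⟨v, hv⟩ := hPsurj (Pi.single j 1)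
    have h1 : ((B' - 1) ^ S * P) *ᵥ v = 0 := by rw [h0, Matrix.zero_mulVec]
    rw [← Matrix.mulVec_mulVec] at h1
    have hv' : P *ᵥ v = Pi.single j 1 := hv
    rw [hv', Matrix.mulVec_single] at h1
    have h2 := congrFun h1 i
    simpa using h2
  have hB'ne1 : B' ≠ 1 := by
    intro hB'1
    have hPBP : P * B = P := by rw [hPB, hB'1, Matrix.one_mul]
    have hrowB : ∀ i : Fin n, Bt *ᵥ ((bN i : IVec d)) = (bN i : IVec d) := by
      intro i
      funext j
      have h1 : (P * B) i j = P i j := by rw [hPBP]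
      rw [Matrix.mul_apply] at h1
      rw [show (Bt *ᵥ (bN i : IVec d)) j = ∑ k, B k j * (bN i : IVec d) k by
        simp [Matrix.mulVec, dotProduct, hBtdef, Matrix.transpose_apply]]
      calc ∑ k, B k j * (bN i : IVec d) k = ∑ k, P i k * B k j := by
            refine Finset.sum_congr rfl fun k _ => ?_
            show _ = (bN i : IVec d) k * B k j
            ring
        _ = P i j := h1
    have hTeq : Bt.mulVecLin ∘ₗ Λ.subtype = Λ.subtype := by
      apply Module.Basis.ext bN
      intro i
      show Bt.mulVecLin ((bN i : IVec d)) = ((bN i : IVec d))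
      rw [Matrix.mulVecLin_apply, hrowB i]
    have h5 := congrFun (congrArg DFunLike.coe hTeq) ⟨(Bt - 1) *ᵥ m, hm1Λ⟩
    have h6 : Bt *ᵥ ((Bt - 1) *ᵥ m) = (Bt - 1) *ᵥ m := by
      simpa [Matrix.mulVecLin_apply] using h5
    apply hm2
    rw [Matrix.sub_mulVec, Matrix.one_mulVec, h6, sub_self]
  -- the inverse of B' and the circle-translation permutation
  obtain ⟨C', hC1, hC2⟩ := unipotent_inv hB'nil
  let β' : Td n := toT (fun i => ∑ j, (P i j : ℝ) * β j)
  let cperm : Equiv.Perm (Td n) :=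
    { toFun := affT B' β'
      invFun := fun y => projT C' (y - β')
      left_inv := by
        intro x
        have h1 : affT B' β' x - β' = projT B' x := by
          funext i
          show (∑ j, B' i j • x j) + β' i - β' i = _
          rw [add_sub_cancel_right]
          rfl
        show projT C' (affT B' β' x - β') = x
        rw [h1, projT_comp, hC1, projT_one]
      right_inv := by
        intro y
        show affT B' β' (projT C' (y - β')) = y
        rw [affT_projT, hC2]
        funext i
        show projT (1 : Mat n) (y - β') i + β' i = y i
        rw [congrFun (projT_one (y - β')) i, Pi.sub_apply, sub_add_cancel] }
  -- assemble the factor and contradict `hnofactor`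
  have hPα : ∀ i, (∑ j, (P i j : ℝ) * α j) = 0 := by
    intro i
    exact hpairΛ _ (bN i).2
  refine hnofactor ⟨⟨n, hnpos, P, hPsurj, 1, B', 0, β', ?_, ?_, ?_⟩,
    Or.inr (Or.inr ⟨⟨S, hB'nil⟩, hB'ne1⟩)⟩
  · -- intertwineA
    funext x
    rw [Function.comp_apply, Function.comp_apply, projT_affT, affT_one_zero]
    funext i
    rw [hPA, hPα i]
    show (∑ k, P i k • x k) + (((0 : ℝ) : AddCircle (1 : ℝ))) = projT P x i
    rw [show (((0 : ℝ) : AddCircle (1 : ℝ))) = 0 from rfl, add_zero]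
    rfl
  · -- intertwineB
    funext x
    rw [Function.comp_apply, Function.comp_apply, projT_affT, affT_projT]
    funext i
    rw [hPB]
    simp only [β', toT]
  · -- rank one
    exact ⟨cperm, ⟨B', β', rfl⟩,
      ⟨1, Subgroup.one_mem _, by rw [affT_one_zero]; rfl⟩,
      ⟨cperm, Subgroup.mem_zpowers _, rfl⟩⟩

end ParabolicKAM
end
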